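/- arXiv:2502.18903 — 9 statements merged into one kernel-verified Lean document; each statement's English description precedes it below -/
import Mathlib

section
/- Let A be an associative ring with pairwise orthogonal idempotents e₁,…,eₙ (n ≥ 3) summing to 1, each full (A eᵢ A = A). Then for each i and each j ≠ i, the diagonal commutators satisfy [eᵢAeᵢ, eᵢAeᵢ] ⊆ [eᵢAeⱼ, eⱼAeᵢ], where brackets denote additive spans of ring commutators. -/
/-!
Fix `x = eᵢaeᵢ`, `y = eᵢbeᵢ` and consider the additive map `t ↦ x(eᵢteᵢ)y - yx(eᵢteᵢ)`, which
sends `1` to `xy - yx`. On an element `t = c eⱼ d` it is a difference of two commutators of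
`eᵢAeⱼ` with `eⱼAeᵢ`: with `p = eᵢceⱼ` and `q = eⱼdeᵢ`,
`x(pq)y - yx(pq) = [xp, qy] - [yxp, q]`.
Since `eⱼ` is full, the elements `c eⱼ d` span `A` additively, so the map lands in
`[eᵢAeⱼ, eⱼAeᵢ]` everywhere, in particular at `1`.
-/

section

variable {A : Type*} [Ring A]

/-- `[eAf, fAe]`. -/
def cornerCommutators (e f : A) : AddSubgroup A :=
  AddSubgroup.closure
    {z : A | ∃ a b : A, z = (e * a * f) * (f * b * e) - (f * b * e) * (e * a * f)}

lemma commutator_mem_cornerCommutators {e f u v : A} (hu : e * u * f = u) (hv : f * v * e = v) :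
    u * v - v * u ∈ cornerCommutators e f :=
  AddSubgroup.subset_closure ⟨u, v, by rw [hu, hv]⟩

lemma corner_mul_sub_mem_cornerCommutators {e f : A} (he : IsIdempotentElem e)
    (hf : IsIdempotentElem f) (a b c d : A) :
    (e * a * e) * (e * (c * f * d) * e) * (e * b * e)
      - (e * b * e) * (e * a * e) * (e * (c * f * d) * e) ∈ cornerCommutators e f := by
  set x := e * a * e
  set y := e * b * e
  set p := e * c * f
  set q := f * d * e
  have hpq : e * (c * f * d) * e = p * q := by
    simp only [p, q, mul_assoc, hf.mul_self_mul]
  have key : x * (p * q) * y - y * x * (p * q) = (x * p * (q * y) - q * y * (x * p))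
      - (y * x * p * q - q * (y * x * p)) := by
    noncomm_ring
  rw [hpq, key]
  refine sub_mem (commutator_mem_cornerCommutators ?_ ?_) (commutator_mem_cornerCommutators ?_ ?_)
  all_goals simp only [x, y, p, q, mul_assoc, he.eq, hf.eq, he.mul_self_mul, hf.mul_self_mul]

lemma cornerCommutators_le_of_full {e f : A} (he : IsIdempotentElem e) (hf : IsIdempotentElem f)
    (hfull : AddSubgroup.closure {x : A | ∃ a b : A, x = a * f * b} = ⊤) :
    cornerCommutators e e ≤ cornerCommutators e f := by
  rw [cornerCommutators, AddSubgroup.closure_le]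
  rintro _ ⟨a, b, rfl⟩
  let g : A →+ A := AddMonoidHom.mk'
    (fun t => (e * a * e) * (e * t * e) * (e * b * e) - (e * b * e) * (e * a * e) * (e * t * e))
    (fun s t => by noncomm_ring)
  have hg : AddSubgroup.closure {x : A | ∃ a b : A, x = a * f * b} ≤
      (cornerCommutators e f).comap g := by
    rw [AddSubgroup.closure_le]
    rintro _ ⟨c, d, rfl⟩
    exact corner_mul_sub_mem_cornerCommutators he hf a b c d
  have hg1 : g 1 = (e * a * e) * (e * b * e) - (e * b * e) * (e * a * e) := by
    simp only [g, AddMonoidHom.mk'_apply, one_mul, he.eq, mul_assoc, he.mul_self_mul]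
  rw [← hg1]
  exact hg (hfull ▸ AddSubgroup.mem_top 1)

end

theorem stmt_3_general (A : Type*) [Ring A] (n : ℕ) (e : Fin n → A)
    (hidem : ∀ i, e i * e i = e i)
    (hfull : ∀ i, AddSubgroup.closure {x : A | ∃ a b : A, x = a * e i * b} = ⊤)
    (i j : Fin n) :
    AddSubgroup.closure
        {z : A | ∃ a b : A,
          z = (e i * a * e i) * (e i * b * e i) - (e i * b * e i) * (e i * a * e i)} ≤
      AddSubgroup.closure
        {z : A | ∃ a b : A,
          z = (e i * a * e j) * (e j * b * e i) - (e j * b * e i) * (e i * a * e j)} :=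
  cornerCommutators_le_of_full (hidem i) (hidem j) (hfull j)

/-- Diagonal commutators `[eᵢAeᵢ, eᵢAeᵢ]` lie in `[eᵢAeⱼ, eⱼAeᵢ]`. -/
theorem stmt_3 (A : Type*) [Ring A] (n : ℕ) (hn : 3 ≤ n) (e : Fin n → A)
    (hidem : ∀ i, e i * e i = e i)
    (horth : ∀ i j, i ≠ j → e i * e j = 0)
    (hsum : ∑ i, e i = 1)
    (hfull : ∀ i, AddSubgroup.closure {x : A | ∃ a b : A, x = a * e i * b} = ⊤)
    (i j : Fin n) (hij : i ≠ j) :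
    AddSubgroup.closure
        {z : A | ∃ a b : A,
          z = (e i * a * e i) * (e i * b * e i) - (e i * b * e i) * (e i * a * e i)} ≤
      AddSubgroup.closure
        {z : A | ∃ a b : A,
          z = (e i * a * e j) * (e j * b * e i) - (e j * b * e i) * (e i * a * e j)} :=
  stmt_3_general A n e hidem hfull i j
end

section
/- Let A be a unital associative ring with pairwise orthogonal full idempotents e₁,…,eₙ (n ≥ 3) summing to 1. Then the additive group [A,A] (generated by all commutators ab - ba) equals the sum over all i ≠ j of [eᵢAeⱼ, eⱼAeᵢ] plus the sum over all i ≠ j of eᵢAeⱼ. -/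
/-!
Expanding `x` and `y` in the Peirce decomposition `x = ∑ eᵢ x eⱼ` writes `xy - yx` as a sum of
commutators of Peirce components. Such a commutator either lies in some `eᵢAeₗ` with `i ≠ l`, or
lies in `[eᵢAeⱼ, eⱼAeᵢ]`, or is diagonal, `[eᵢaeᵢ, eᵢbeᵢ]`. In the diagonal case pick `j ≠ i`;
fullness of `eⱼ` writes `eᵢ` as a sum of products `(eᵢpeⱼ)(eⱼqeᵢ)`, and the identity
`αβ(uv) - β(uv)α = [αβu, v] - [βu, vα]` splits the diagonal commutator into elements of
`[eᵢAeⱼ, eⱼAeᵢ]`. Conversely `eᵢaeⱼ = [eᵢ, eᵢaeⱼ]` for `i ≠ j`.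
-/

open Finset

section Ring

variable {A : Type*} [Ring A]

theorem sum_commutator_sum_mem {ι κ : Type*} {H : AddSubgroup A} (s : Finset ι) (t : Finset κ)
    (X : ι → A) (Y : κ → A) (h : ∀ p ∈ s, ∀ q ∈ t, X p * Y q - Y q * X p ∈ H) :
    (∑ p ∈ s, X p) * (∑ q ∈ t, Y q) - (∑ q ∈ t, Y q) * (∑ p ∈ s, X p) ∈ H := by
  rw [sum_mul_sum, sum_mul_sum, sum_comm (s := t), ← sum_sub_distrib]
  exact sum_mem fun p hp => by
    rw [← sum_sub_distrib]
    exact sum_mem fun q hq => h p hp q hq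

theorem mul_mul_eq_commutator_of_mul_eq_zero {e f : A} (he : IsIdempotentElem e) (hfe : f * e = 0)
    (a : A) : e * a * f = e * (e * a * f) - (e * a * f) * e := by
  rw [← mul_assoc, ← mul_assoc, he.eq, mul_assoc (e * a), hfe, mul_zero, sub_zero]

theorem peirce_mul_peirce_of_mul_eq_zero {e f g h : A} (hfg : f * g = 0) (x y : A) :
    e * x * f * (g * y * h) = 0 := by
  rw [mul_assoc, mul_assoc, mul_assoc, ← mul_assoc f, hfg, zero_mul, mul_zero, mul_zero]

theorem peirce_mul_peirce {e f h : A} (hf : IsIdempotentElem f) (x y : A) :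
    e * x * f * (f * y * h) = e * (x * f * y) * h := by
  simp only [mul_assoc, ← mul_assoc f f, hf.eq]

theorem diagonal_commutator_mem_closure {e f : A} (he : IsIdempotentElem e)
    (hf : IsIdempotentElem f) (hef : e ∈ AddSubgroup.closure {x : A | ∃ p q : A, x = p * f * q})
    (a b : A) :
    (e * a * e) * (e * b * e) - (e * b * e) * (e * a * e) ∈ AddSubgroup.closure
      {z : A | ∃ u v : A, z = (e * u * f) * (f * v * e) - (f * v * e) * (e * u * f)} := by
  set H := AddSubgroup.closure
    {z : A | ∃ u v : A, z = (e * u * f) * (f * v * e) - (f * v * e) * (e * u * f)}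
  set α := e * a * e
  set β := e * b * e
  let φ : A →+ A := AddMonoidHom.mk' (fun s => α * β * (e * s * e) - β * (e * s * e) * α)
    (fun s t => by noncomm_ring)
  have hgen : {x : A | ∃ p q : A, x = p * f * q} ⊆ H.comap φ := by
    rintro _ ⟨p, q, rfl⟩
    set u := e * p * f
    set v := f * q * e
    have hsplit : e * (p * f * q) * e = u * v := (peirce_mul_peirce hf p q).symm
    have hφ : φ (p * f * q) =
        ((α * β * u) * v - v * (α * β * u)) - ((β * u) * (v * α) - (v * α) * (β * u)) := by
      simp only [φ, AddMonoidHom.mk'_apply, hsplit]; noncomm_ring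
    have hαβ : α * β * u = e * (a * e * e * b * e * e * p) * f := by
      simp only [α, β, u, mul_assoc]
    have hβ : β * u = e * (b * e * e * p) * f := by simp only [β, u, mul_assoc]
    have hα : v * α = f * (q * e * e * a) * e := by simp only [α, v, mul_assoc]
    change φ (p * f * q) ∈ H
    rw [hφ, hαβ, hβ, hα]
    exact sub_mem (AddSubgroup.subset_closure ⟨_, _, rfl⟩)
      (AddSubgroup.subset_closure ⟨_, _, rfl⟩)
  have hφe : φ e = α * β - β * α := by
    have hβe : β * e = β := by simp only [β, mul_assoc, he.eq]
    have heee : e * e * e = e := by rw [he.eq, he.eq]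
    change α * β * (e * e * e) - β * (e * e * e) * α = _
    rw [heee, mul_assoc α, hβe]
  rw [← hφe]
  exact (AddSubgroup.closure_le _).mpr hgen hef

end Ring

section Peirce

variable {A ι : Type*} [Ring A]

theorem sum_peirce_eq [Fintype ι] {e : ι → A} (hsum : ∑ i, e i = 1) (x : A) :
    ∑ p : ι × ι, e p.1 * x * e p.2 = x := by
  rw [Fintype.sum_prod_type]
  simp only [← mul_sum, ← sum_mul, hsum, one_mul, mul_one]

variable (e : ι → A)

def offDiagonalCommutators : AddSubgroup A :=
  ⨆ i, ⨆ j, ⨆ _ : i ≠ j, AddSubgroup.closure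
    {z : A | ∃ a b : A, z = (e i * a * e j) * (e j * b * e i) - (e j * b * e i) * (e i * a * e j)}

def offDiagonalPeirce : AddSubgroup A :=
  ⨆ i, ⨆ j, ⨆ _ : i ≠ j, AddSubgroup.closure {z : A | ∃ a : A, z = e i * a * e j}

variable {e}

theorem closure_le_offDiagonalCommutators {i j : ι} (hij : i ≠ j) :
    AddSubgroup.closure {z : A | ∃ a b : A,
      z = (e i * a * e j) * (e j * b * e i) - (e j * b * e i) * (e i * a * e j)} ≤
      offDiagonalCommutators e :=
  le_iSup_of_le i <| le_iSup_of_le j <| le_iSup_of_le hij le_rfl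

theorem mem_offDiagonalCommutators {i j : ι} (hij : i ≠ j) (a b : A) :
    (e i * a * e j) * (e j * b * e i) - (e j * b * e i) * (e i * a * e j) ∈
      offDiagonalCommutators e :=
  closure_le_offDiagonalCommutators hij (AddSubgroup.subset_closure ⟨a, b, rfl⟩)

theorem mem_offDiagonalPeirce {i j : ι} (hij : i ≠ j) (a : A) :
    e i * a * e j ∈ offDiagonalPeirce e :=
  AddSubgroup.mem_iSup_of_mem i <| AddSubgroup.mem_iSup_of_mem j <|
    AddSubgroup.mem_iSup_of_mem hij (AddSubgroup.subset_closure ⟨a, rfl⟩)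

variable [Nontrivial ι] (hidem : ∀ i, IsIdempotentElem (e i))
  (horth : ∀ i j, i ≠ j → e i * e j = 0)
  (hfull : ∀ i, AddSubgroup.closure {x : A | ∃ a b : A, x = a * e i * b} = ⊤)

include hidem horth hfull in
theorem peirce_commutator_mem (i j k l : ι) (x y : A) :
    (e i * x * e j) * (e k * y * e l) - (e k * y * e l) * (e i * x * e j) ∈
      offDiagonalCommutators e ⊔ offDiagonalPeirce e := by
  rcases eq_or_ne j k with rfl | hjk <;> rcases eq_or_ne l i with rfl | hli
  · rcases eq_or_ne l j with rfl | hlj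
    · obtain ⟨m, hm⟩ := exists_ne l
      have hl : e l ∈ AddSubgroup.closure {z : A | ∃ p q : A, z = p * e m * q} := by
        rw [hfull m]; trivial
      exact AddSubgroup.mem_sup_left <| closure_le_offDiagonalCommutators hm.symm <|
        diagonal_commutator_mem_closure (hidem l) (hidem m) hl x y
    · exact AddSubgroup.mem_sup_left (mem_offDiagonalCommutators hlj x y)
  · rw [peirce_mul_peirce (hidem j), peirce_mul_peirce_of_mul_eq_zero (horth l i hli), sub_zero]
    exact AddSubgroup.mem_sup_right (mem_offDiagonalPeirce hli.symm _)
  · rw [peirce_mul_peirce_of_mul_eq_zero (horth j k hjk), peirce_mul_peirce (hidem l), zero_sub]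
    exact neg_mem (AddSubgroup.mem_sup_right (mem_offDiagonalPeirce hjk.symm _))
  · rw [peirce_mul_peirce_of_mul_eq_zero (horth j k hjk),
      peirce_mul_peirce_of_mul_eq_zero (horth l i hli), sub_zero]
    exact zero_mem _

include hidem horth hfull in
theorem closure_commutators_eq_offDiagonal [Fintype ι] (hsum : ∑ i, e i = 1) :
    AddSubgroup.closure {z : A | ∃ x y : A, z = x * y - y * x} =
      offDiagonalCommutators e ⊔ offDiagonalPeirce e := by
  refine le_antisymm ((AddSubgroup.closure_le _).mpr ?_) (sup_le ?_ ?_)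
  · rintro _ ⟨x, y, rfl⟩
    rw [← sum_peirce_eq hsum x, ← sum_peirce_eq hsum y]
    exact sum_commutator_sum_mem _ _ _ _ fun p _ q _ =>
      peirce_commutator_mem hidem horth hfull p.1 p.2 q.1 q.2 x y
  · refine iSup_le fun i => iSup_le fun j => iSup_le fun _ => (AddSubgroup.closure_le _).mpr ?_
    rintro _ ⟨a, b, rfl⟩
    exact AddSubgroup.subset_closure ⟨_, _, rfl⟩
  · refine iSup_le fun i => iSup_le fun j => iSup_le fun hij => (AddSubgroup.closure_le _).mpr ?_
    rintro _ ⟨a, rfl⟩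
    exact AddSubgroup.subset_closure ⟨_, _,
      mul_mul_eq_commutator_of_mul_eq_zero (hidem i) (horth j i hij.symm) a⟩

end Peirce

/-- `[A,A]` equals the sum over `i ≠ j` of `[eᵢAeⱼ, eⱼAeᵢ]` plus the sum over
`i ≠ j` of the Peirce components `eᵢAeⱼ`. -/
theorem stmt_4 (A : Type*) [Ring A] (n : ℕ) (hn : 3 ≤ n) (e : Fin n → A)
    (hidem : ∀ i, e i * e i = e i)
    (horth : ∀ i j, i ≠ j → e i * e j = 0)
    (hsum : ∑ i, e i = 1)
    (hfull : ∀ i, AddSubgroup.closure {x : A | ∃ a b : A, x = a * e i * b} = ⊤) :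
    AddSubgroup.closure {z : A | ∃ x y : A, z = x * y - y * x} =
      (⨆ i, ⨆ j, ⨆ _ : i ≠ j, AddSubgroup.closure
        {z : A | ∃ a b : A,
          z = (e i * a * e j) * (e j * b * e i) - (e j * b * e i) * (e i * a * e j)}) ⊔
      (⨆ i, ⨆ j, ⨆ _ : i ≠ j,
        AddSubgroup.closure {z : A | ∃ a : A, z = e i * a * e j}) := by
  have : Nontrivial (Fin n) := Fin.nontrivial_iff_two_le.mpr (by omega)
  exact closure_commutators_eq_offDiagonal hidem horth hfull hsum
end

section
/- Let A be a unital associative ring with pairwise orthogonal full idempotents e₁,…,eₙ (n ≥ 3) summing to 1. Then the Lie ring [A,A] is perfect: [[A,A],[A,A]] = [A,A]. -/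
/-!
Write `L = [A,A]` and `D = [L,L]`; clearly `D ≤ L`. For `i ≠ j` the Peirce component `eᵢAeⱼ`
lies in `L`, since `eᵢxeⱼ = [eᵢ, eᵢxeⱼ]`. Given a third index `m`, fullness `A = AeₘA` gives
`eᵢAeⱼ = (eᵢAeₘ)(eₘAeⱼ)`, and `eᵢaeₘ · eₘbeⱼ = [eᵢaeₘ, eₘbeⱼ] ∈ D`, so `eᵢAeⱼ ⊆ D`.
On the diagonal, `eᵢAeᵢ = (eᵢAeₘ)(eₘAeᵢ)` and `[x, uv] = [xu, v] + [vx, u]` put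
`[eᵢAeᵢ, eᵢAeᵢ]` into `D`. Expanding `[a, b]` along the Peirce decomposition
`a = ∑ᵢⱼ eᵢaeⱼ`, every term `[eᵢaeⱼ, eₖbeₗ]` is of one of these kinds or zero.
-/

open Finset

section

variable {A : Type*} [Ring A]

def commutatorSpan (A : Type*) [Ring A] : AddSubgroup A :=
  AddSubgroup.closure {w : A | ∃ a b : A, w = a * b - b * a}

def bracketSpan (L M : AddSubgroup A) : AddSubgroup A :=
  AddSubgroup.closure {z : A | ∃ x ∈ L, ∃ y ∈ M, z = x * y - y * x}

/-- `A r A = A`. -/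
def IsFull (r : A) : Prop :=
  AddSubgroup.closure {x : A | ∃ a b : A, x = a * r * b} = ⊤

lemma bracketSpan_le_commutatorSpan (L M : AddSubgroup A) :
    bracketSpan L M ≤ commutatorSpan A :=
  (AddSubgroup.closure_le _).2 fun _ ⟨x, _, y, _, hz⟩ => AddSubgroup.subset_closure ⟨x, y, hz⟩

lemma IsFull.map_mem {B : Type*} [AddGroup B] {r : A} (hr : IsFull r) (f : A →+ B)
    {S : AddSubgroup B} (h : ∀ a b, f (a * r * b) ∈ S) (x : A) : f x ∈ S := by
  have hle : AddSubgroup.closure {x : A | ∃ a b : A, x = a * r * b} ≤ S.comap f :=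
    (AddSubgroup.closure_le _).2 fun _ ⟨a, b, hx⟩ => hx ▸ h a b
  exact hle (hr ▸ AddSubgroup.mem_top x)

lemma mul_mul_eq_zero_of_mul_eq_zero {p q : A} (h : p * q = 0) (z : A) : p * (q * z) = 0 := by
  rw [← mul_assoc, h, zero_mul]

lemma peirce_mul_peirce_of_mul_eq_zero_s5 {q r : A} (h : q * r = 0) (p s x y : A) :
    p * x * q * (r * y * s) = 0 := by
  simp only [mul_assoc, mul_mul_eq_zero_of_mul_eq_zero h, mul_zero]

lemma peirce_mul_peirce_s5 {q : A} (hq : IsIdempotentElem q) (p s x y : A) :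
    p * x * q * (q * y * s) = p * (x * q * y) * s := by
  simp only [mul_assoc, hq.mul_self_mul]

lemma mul_mul_mem_commutatorSpan {p q : A} (hp : IsIdempotentElem p) (hqp : q * p = 0) (x : A) :
    p * x * q ∈ commutatorSpan A := by
  refine AddSubgroup.subset_closure ⟨p, p * x * q, ?_⟩
  simp only [mul_assoc, hp.mul_self_mul, hqp, mul_zero, sub_zero]

lemma mul_mul_mem_bracketSpan {p q r : A} (hp : IsIdempotentElem p) (hr : IsIdempotentElem r)
    (hr_full : IsFull r) (hqp : q * p = 0) (hrp : r * p = 0) (hqr : q * r = 0) (x : A) :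
    p * x * q ∈ bracketSpan (commutatorSpan A) (commutatorSpan A) := by
  refine hr_full.map_mem ((AddMonoidHom.mulRight q).comp (AddMonoidHom.mulLeft p))
    (fun a b => ?_) x
  have h : p * (a * r * b) * q = p * a * r * (r * b * q) - r * b * q * (p * a * r) := by
    rw [peirce_mul_peirce_s5 hr, peirce_mul_peirce_of_mul_eq_zero_s5 hqp, sub_zero, mul_assoc a]
  exact AddSubgroup.subset_closure ⟨_, mul_mul_mem_commutatorSpan hp hrp a,
    _, mul_mul_mem_commutatorSpan hr hqr b, h⟩

lemma corner_commutator_mem_bracketSpan {p r : A} (hp : IsIdempotentElem p)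
    (hr : IsIdempotentElem r) (hr_full : IsFull r) (hpr : p * r = 0) (hrp : r * p = 0)
    (a b : A) :
    p * a * p * (p * b * p) - p * b * p * (p * a * p) ∈
      bracketSpan (commutatorSpan A) (commutatorSpan A) := by
  set x := p * a * p
  let ad : A →+ A := AddMonoidHom.mk' (fun y => x * (p * y * p) - p * y * p * x)
    (fun _ _ => by noncomm_ring)
  refine hr_full.map_mem ad (fun c d => ?_) b
  set u := p * c * r
  set v := r * d * p
  have huv : p * (c * r * d) * p = u * v := (peirce_mul_peirce_s5 hr p p c d).symm
  have hxu : x * u = p * (a * p * c) * r := peirce_mul_peirce_s5 hp p r a c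
  have hvx : v * x = r * (d * p * a) * p := peirce_mul_peirce_s5 hp r p d a
  have hsplit : x * (u * v) - u * v * x = (x * u * v - v * (x * u)) + (v * x * u - u * (v * x)) := by
    noncomm_ring
  change x * (p * (c * r * d) * p) - p * (c * r * d) * p * x ∈ _
  rw [huv, hsplit]
  refine add_mem (AddSubgroup.subset_closure ⟨_, ?_, _, ?_, rfl⟩)
    (AddSubgroup.subset_closure ⟨_, ?_, _, ?_, rfl⟩)
  · exact hxu ▸ mul_mul_mem_commutatorSpan hp hrp _
  · exact mul_mul_mem_commutatorSpan hr hpr d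
  · exact hvx ▸ mul_mul_mem_commutatorSpan hr hpr _
  · exact mul_mul_mem_commutatorSpan hp hrp c

lemma sum_mul_sum_sub_sum_mul_sum {ι κ : Type*} (s : Finset ι) (t : Finset κ) (f : ι → A)
    (g : κ → A) :
    (∑ i ∈ s, f i) * (∑ j ∈ t, g j) - (∑ j ∈ t, g j) * (∑ i ∈ s, f i) =
      ∑ i ∈ s, ∑ j ∈ t, (f i * g j - g j * f i) := by
  rw [sum_mul_sum, sum_mul_sum, sum_comm (s := t) (t := s) (f := fun j i => g j * f i)]
  simp only [← sum_sub_distrib]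

variable {ι : Type*} {e : ι → A}

lemma peirce_mem_bracketSpan (he : OrthogonalIdempotents e) (hfull : ∀ i, IsFull (e i))
    (h3 : 3 ≤ ENat.card ι) {i j : ι} (hij : i ≠ j) (x : A) :
    e i * x * e j ∈ bracketSpan (commutatorSpan A) (commutatorSpan A) := by
  obtain ⟨m, hmi, hmj⟩ := ENat.exists_ne_ne_of_three_le h3 i j
  exact mul_mul_mem_bracketSpan (he.idem i) (he.idem m) (hfull m) (he.ortho hij.symm)
    (he.ortho hmi) (he.ortho hmj.symm) x

lemma peirce_commutator_mem_bracketSpan (he : OrthogonalIdempotents e)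
    (hfull : ∀ i, IsFull (e i)) (h3 : 3 ≤ ENat.card ι) (i j k l : ι) (x y : A) :
    e i * x * e j * (e k * y * e l) - e k * y * e l * (e i * x * e j) ∈
      bracketSpan (commutatorSpan A) (commutatorSpan A) := by
  rcases eq_or_ne j k with rfl | hjk <;> rcases eq_or_ne i l with rfl | hil
  · rcases eq_or_ne i j with rfl | hij
    · obtain ⟨m, hmi, -⟩ := ENat.exists_ne_ne_of_three_le h3 i i
      exact corner_commutator_mem_bracketSpan (he.idem i) (he.idem m) (hfull m)
        (he.ortho hmi.symm) (he.ortho hmi) x y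
    · exact AddSubgroup.subset_closure
        ⟨_, mul_mul_mem_commutatorSpan (he.idem i) (he.ortho hij.symm) x,
          _, mul_mul_mem_commutatorSpan (he.idem j) (he.ortho hij) y, rfl⟩
  · rw [peirce_mul_peirce_s5 (he.idem j), peirce_mul_peirce_of_mul_eq_zero_s5 (he.ortho hil.symm),
      sub_zero]
    exact peirce_mem_bracketSpan he hfull h3 hil _
  · rw [peirce_mul_peirce_of_mul_eq_zero_s5 (he.ortho hjk), peirce_mul_peirce_s5 (he.idem i), zero_sub]
    exact neg_mem (peirce_mem_bracketSpan he hfull h3 hjk.symm _)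
  · rw [peirce_mul_peirce_of_mul_eq_zero_s5 (he.ortho hjk),
      peirce_mul_peirce_of_mul_eq_zero_s5 (he.ortho hil.symm), sub_zero]
    exact zero_mem _

lemma sum_peirce [Fintype ι] (hsum : ∑ i, e i = 1) (a : A) : ∑ i, ∑ j, e i * a * e j = a := by
  simp only [← mul_sum, ← sum_mul, hsum, one_mul, mul_one]

lemma commutatorSpan_le_of_peirce [Fintype ι] (hsum : ∑ i, e i = 1) {S : AddSubgroup A}
    (h : ∀ i j k l x y, e i * x * e j * (e k * y * e l) - e k * y * e l * (e i * x * e j) ∈ S) :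
    commutatorSpan A ≤ S := by
  rw [commutatorSpan, AddSubgroup.closure_le]
  rintro _ ⟨a, b, rfl⟩
  rw [← sum_peirce hsum a, ← sum_peirce hsum b, sum_mul_sum_sub_sum_mul_sum]
  refine sum_mem fun i _ => sum_mem fun k _ => ?_
  rw [sum_mul_sum_sub_sum_mul_sum]
  exact sum_mem fun j _ => sum_mem fun l _ => h i j k l a b

end

/-- The Lie ring `[A,A]` is perfect: `[[A,A],[A,A]] = [A,A]`. -/
theorem stmt_5 (A : Type*) [Ring A] (n : ℕ) (hn : 3 ≤ n) (e : Fin n → A)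
    (hidem : ∀ i, e i * e i = e i)
    (horth : ∀ i j, i ≠ j → e i * e j = 0)
    (hsum : ∑ i, e i = 1)
    (hfull : ∀ i, AddSubgroup.closure {x : A | ∃ a b : A, x = a * e i * b} = ⊤) :
    AddSubgroup.closure
        {z : A | ∃ x ∈ AddSubgroup.closure {w : A | ∃ a b : A, w = a * b - b * a},
          ∃ y ∈ AddSubgroup.closure {w : A | ∃ a b : A, w = a * b - b * a},
          z = x * y - y * x} =
      AddSubgroup.closure {w : A | ∃ a b : A, w = a * b - b * a} := by
  change bracketSpan (commutatorSpan A) (commutatorSpan A) = commutatorSpan A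
  have he : OrthogonalIdempotents e := ⟨hidem, horth⟩
  have h3 : 3 ≤ ENat.card (Fin n) := by simpa using hn
  exact le_antisymm (bracketSpan_le_commutatorSpan _ _)
    (commutatorSpan_le_of_peirce hsum (peirce_commutator_mem_bracketSpan he hfull h3))
end

section
/- Let A be a unital associative ring with orthogonal full idempotents e₁, e₂, e₃ summing to 1, and suppose i, j, k are distinct indices in {1,2,3}. If x ∈ eᵢAeⱼ satisfies [x, eⱼAe_k] = 0 (i.e., x·eⱼae_k = eⱼae_k·x for all a ∈ A), then x = 0. -/
/-! Since `x = x eⱼ` and `e_k x = 0`, we get `x (eⱼ a e_k) = eⱼ a e_k x = 0`, so `x` annihilates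
`A e_k A`, which contains `1`. -/

section

variable {A : Type*} [Ring A]

theorem eq_zero_of_mul_full {f x : A}
    (hfull : AddSubgroup.closure {y : A | ∃ a b : A, y = a * f * b} = ⊤)
    (hx : ∀ a b : A, x * (a * f * b) = 0) : x = 0 := by
  have hle : AddSubgroup.closure {y : A | ∃ a b : A, y = a * f * b} ≤
      (AddMonoidHom.mulLeft x).ker :=
    (AddSubgroup.closure_le _).2 fun _ ⟨a, b, hy⟩ => hy ▸ hx a b
  rw [hfull] at hle
  simpa using hle (AddSubgroup.mem_top 1)

theorem mul_mul_mul_eq_zero_of_commute {f g x : A} (hxf : x * f = x) (hgx : g * x = 0)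
    (hcomm : ∀ a : A, x * (f * a * g) = f * a * g * x) (a b : A) :
    x * (a * g * b) = 0 :=
  calc x * (a * g * b) = x * (f * a * g) * b := by
        conv_lhs => rw [← hxf]
        simp only [mul_assoc]
    _ = 0 := by rw [hcomm, mul_assoc (f * a) g x, hgx, mul_zero, zero_mul]
end

theorem stmt_6_general (A : Type*) [Ring A] (e : Fin 3 → A)
    (hidem : ∀ i, e i * e i = e i)
    (horth : ∀ i j, i ≠ j → e i * e j = 0)
    (hfull : ∀ i, AddSubgroup.closure {x : A | ∃ a b : A, x = a * e i * b} = ⊤)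
    (i j k : Fin 3) (hik : i ≠ k)
    (x : A) (hx : ∃ a : A, x = e i * a * e j)
    (hcomm : ∀ a : A, x * (e j * a * e k) - (e j * a * e k) * x = 0) :
    x = 0 := by
  obtain ⟨c, rfl⟩ := hx
  have hxe : e i * c * e j * e j = e i * c * e j := by rw [mul_assoc _ (e j), hidem]
  have hex : e k * (e i * c * e j) = 0 := by
    rw [← mul_assoc, ← mul_assoc, horth k i hik.symm, zero_mul, zero_mul]
  exact eq_zero_of_mul_full (hfull k)
    (mul_mul_mul_eq_zero_of_commute hxe hex fun a => sub_eq_zero.1 (hcomm a))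

/-- If `x ∈ eᵢAeⱼ` commutes with every element of `eⱼAe_k` (for `i,j,k` distinct),
then `x = 0`. -/
theorem stmt_6 (A : Type*) [Ring A] (e : Fin 3 → A)
    (hidem : ∀ i, e i * e i = e i)
    (horth : ∀ i j, i ≠ j → e i * e j = 0)
    (hsum : ∑ i, e i = 1)
    (hfull : ∀ i, AddSubgroup.closure {x : A | ∃ a b : A, x = a * e i * b} = ⊤)
    (i j k : Fin 3) (hij : i ≠ j) (hjk : j ≠ k) (hik : i ≠ k)
    (x : A) (hx : ∃ a : A, x = e i * a * e j)
    (hcomm : ∀ a : A, x * (e j * a * e k) - (e j * a * e k) * x = 0) :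
    x = 0 :=
  stmt_6_general A e hidem horth hfull i j k hik x hx hcomm
end

section
/- Let A be a unital associative ring with orthogonal full idempotents e₁, e₂, e₃ summing to 1, and i ≠ j in {1,2,3}. Then eᵢAeⱼ = (eᵢAe_k)(e_kAeⱼ) for k the remaining index; in particular every element of eᵢAeⱼ is a sum of commutators [a, b] with a ∈ eᵢAe_k, b ∈ e_kAeⱼ. -/
/-! The Peirce corner `p A q` is the image of `A` under `x ↦ p x q`. Since `A` is additively
generated by the products `a f b`, the corner is additively generated by
`p (a f b) q = (p a f)(f b q)`. Since `i ≠ j`, the reversed product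
`(e_k b e_j)(e_i a e_k)` contains `e_j e_i = 0`, so the commutators coincide with the products. -/

open AddSubgroup

theorem closure_mul_mul_eq_closure_mul_idempotent_mul {R : Type*} [Ring R] {f : R}
    (hf : IsIdempotentElem f) (hfull : closure {x : R | ∃ a b : R, x = a * f * b} = ⊤)
    (p q : R) :
    closure {z : R | ∃ a : R, z = p * a * q} =
      closure {z : R | ∃ a b : R, z = (p * a * f) * (f * b * q)} := by
  have corner_product (a b : R) : (p * a * f) * (f * b * q) = p * (a * f * b) * q := by
    simp only [mul_assoc]
    rw [← mul_assoc f f, hf.eq]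
  apply le_antisymm
  · let φ : R →+ R := (AddMonoidHom.mulRight q).comp (AddMonoidHom.mulLeft p)
    rw [closure_le]
    rintro _ ⟨a, rfl⟩
    have ha : a ∈ closure {x : R | ∃ a b : R, x = a * f * b} := hfull ▸ mem_top a
    have hφa : φ a ∈ (closure {x : R | ∃ a b : R, x = a * f * b}).map φ := mem_map_of_mem φ ha
    rw [AddMonoidHom.map_closure] at hφa
    refine closure_mono ?_ hφa
    rintro _ ⟨_, ⟨a, b, rfl⟩, rfl⟩
    exact ⟨a, b, (corner_product a b).symm⟩
  · refine closure_mono ?_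
    rintro _ ⟨a, b, rfl⟩
    exact ⟨a * f * b, corner_product a b⟩

theorem stmt_7_general (A : Type*) [Ring A] (e : Fin 3 → A)
    (hidem : ∀ i, e i * e i = e i)
    (horth : ∀ i j, i ≠ j → e i * e j = 0)
    (hfull : ∀ i, AddSubgroup.closure {x : A | ∃ a b : A, x = a * e i * b} = ⊤)
    (i j k : Fin 3) (hij : i ≠ j) :
    AddSubgroup.closure {z : A | ∃ a : A, z = e i * a * e j} =
      AddSubgroup.closure
        {z : A | ∃ a b : A, z = (e i * a * e k) * (e k * b * e j)} ∧
    AddSubgroup.closure {z : A | ∃ a : A, z = e i * a * e j} =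
      AddSubgroup.closure
        {z : A | ∃ a b : A,
          z = (e i * a * e k) * (e k * b * e j) - (e k * b * e j) * (e i * a * e k)} := by
  have corner_eq := closure_mul_mul_eq_closure_mul_idempotent_mul (hidem k) (hfull k) (e i) (e j)
  have reversed_product_eq_zero (a b : A) : (e k * b * e j) * (e i * a * e k) = 0 := by
    rw [mul_assoc, mul_assoc (e i), ← mul_assoc (e j), horth j i hij.symm, zero_mul, mul_zero]
  refine ⟨corner_eq, corner_eq.trans ?_⟩
  simp only [reversed_product_eq_zero, sub_zero]

/-- `eᵢAeⱼ = (eᵢAe_k)(e_kAeⱼ)`; in particular every element of `eᵢAeⱼ` is a sum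
of commutators `[a,b]` with `a ∈ eᵢAe_k`, `b ∈ e_kAeⱼ`. -/
theorem stmt_7 (A : Type*) [Ring A] (e : Fin 3 → A)
    (hidem : ∀ i, e i * e i = e i)
    (horth : ∀ i j, i ≠ j → e i * e j = 0)
    (hsum : ∑ i, e i = 1)
    (hfull : ∀ i, AddSubgroup.closure {x : A | ∃ a b : A, x = a * e i * b} = ⊤)
    (i j k : Fin 3) (hij : i ≠ j) (hjk : j ≠ k) (hik : i ≠ k) :
    AddSubgroup.closure {z : A | ∃ a : A, z = e i * a * e j} =
      AddSubgroup.closure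
        {z : A | ∃ a b : A, z = (e i * a * e k) * (e k * b * e j)} ∧
    AddSubgroup.closure {z : A | ∃ a : A, z = e i * a * e j} =
      AddSubgroup.closure
        {z : A | ∃ a b : A,
          z = (e i * a * e k) * (e k * b * e j) - (e k * b * e j) * (e i * a * e k)} :=
  stmt_7_general A e hidem horth hfull i j k hij
end

section
/- Let Γ = ⨁ᵢ₌₁ⁿ ℤωᵢ (n ≥ 3) and Δ = {ωᵢ - ωⱼ : 1 ≤ i ≠ j ≤ n}. If γ ∈ Γ is a sum of elements of Δ and γ ∉ Δ ∪ {0}, then there exists a map g : {ω₁,…,ωₙ} → {-1,1} such that the induced additive map f_g : Γ → ℤ satisfies f_g(γ) ≥ 4. -/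
/-!
Choose `g` to be the sign of `γ`, so that `f_g(γ) = ∑ |γᵢ|`. The coordinates of a sum of roots
add up to zero, hence the positive and negative parts of `γ` have the same total `P`, and
`∑ |γᵢ| = 2P`. Here `P = 0` forces `γ = 0`, while `P = 1` forces the positive and the negative
part to be single unit vectors, i.e. `γ = ωᵢ - ωⱼ` is a root; so `P ≥ 2`.
-/

/-- A vector `v` of the `A_{n-1}` root system `Δ = {ωᵢ - ωⱼ : i ≠ j}` in `ℤⁿ`. -/
def IsRootA (n : ℕ) (v : Fin n → ℤ) : Prop :=
  ∃ i j : Fin n, i ≠ j ∧ v = Pi.single i 1 - Pi.single j 1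

open Finset

section

variable {ι : Type*} [Fintype ι]

theorem exists_sign_forall_sum_mul_eq_sum_abs (v : ι → ℤ) :
    ∃ g : ι → ℤ, (∀ i, g i = 1 ∨ g i = -1) ∧ ∑ i, g i * v i = ∑ i, |v i| := by
  refine ⟨fun i => if 0 ≤ v i then 1 else -1, fun i => by beta_reduce; split_ifs <;> simp, ?_⟩
  refine sum_congr rfl fun i _ => ?_
  beta_reduce
  split_ifs with h
  · rw [one_mul, abs_of_nonneg h]
  · rw [neg_one_mul, abs_of_neg (not_le.mp h)]

theorem exists_eq_single_of_nonneg_of_sum_eq_one [DecidableEq ι] {f : ι → ℤ}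
    (hf : ∀ i, 0 ≤ f i) (hsum : ∑ i, f i = 1) : ∃ i, f = Pi.single i 1 := by
  obtain ⟨i, -, hi⟩ : ∃ i ∈ univ, (0 : ℤ) < f i :=
    exists_lt_of_sum_lt (by rw [sum_const_zero, hsum]; exact one_pos)
  have hsplit := add_sum_erase univ f (mem_univ i)
  have hrest : 0 ≤ ∑ k ∈ univ.erase i, f k := sum_nonneg fun k _ => hf k
  have hrest_zero : ∀ k ∈ univ.erase i, f k = 0 :=
    (sum_eq_zero_iff_of_nonneg fun k _ => hf k).mp (by omega)
  refine ⟨i, funext fun k => ?_⟩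
  rcases eq_or_ne k i with rfl | hki
  · rw [Pi.single_eq_same]; omega
  · rw [Pi.single_eq_of_ne hki, hrest_zero k (mem_erase.mpr ⟨hki, mem_univ k⟩)]

variable {v : ι → ℤ}

theorem sum_negPart_eq_sum_posPart (hv : ∑ i, v i = 0) : ∑ i, (v i)⁻ = ∑ i, (v i)⁺ := by
  have : ∑ i, ((v i)⁺ - (v i)⁻) = 0 := by simpa only [posPart_sub_negPart] using hv
  rw [sum_sub_distrib] at this
  omega

theorem sum_abs_eq_two_mul_sum_posPart (hv : ∑ i, v i = 0) :
    ∑ i, |v i| = 2 * ∑ i, (v i)⁺ := by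
  simp only [← posPart_add_negPart, sum_add_distrib, sum_negPart_eq_sum_posPart hv]
  ring

theorem eq_zero_of_sum_eq_zero_of_sum_posPart_eq_zero (hv : ∑ i, v i = 0)
    (hpos : ∑ i, (v i)⁺ = 0) : v = 0 := by
  have hneg : ∑ i, (v i)⁻ = 0 := (sum_negPart_eq_sum_posPart hv).trans hpos
  funext k
  rw [Pi.zero_apply, ← posPart_sub_negPart (v k),
    (sum_eq_zero_iff_of_nonneg fun i _ => posPart_nonneg (v i)).mp hpos k (mem_univ k),
    (sum_eq_zero_iff_of_nonneg fun i _ => negPart_nonneg (v i)).mp hneg k (mem_univ k), sub_zero]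

end

theorem isRootA_of_sum_eq_zero_of_sum_posPart_eq_one {n : ℕ} {v : Fin n → ℤ}
    (hv : ∑ i, v i = 0) (hpos : ∑ i, (v i)⁺ = 1) : IsRootA n v := by
  obtain ⟨i, hi⟩ := exists_eq_single_of_nonneg_of_sum_eq_one (fun k => posPart_nonneg (v k)) hpos
  obtain ⟨j, hj⟩ := exists_eq_single_of_nonneg_of_sum_eq_one (fun k => negPart_nonneg (v k))
    ((sum_negPart_eq_sum_posPart hv).trans hpos)
  have hdecomp : v = Pi.single i 1 - Pi.single j 1 := by
    funext k
    rw [← posPart_sub_negPart (v k), Pi.sub_apply, ← congrFun hi k, ← congrFun hj k]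
  refine ⟨i, j, fun hij => ?_, hdecomp⟩
  have hzero : v = 0 := by rw [hdecomp, hij, sub_self]
  simp [hzero] at hpos

theorem sum_list_sum_eq_zero_of_isRootA {n : ℕ} {l : List (Fin n → ℤ)}
    (hl : ∀ v ∈ l, IsRootA n v) : ∑ i, l.sum i = 0 := by
  induction l with
  | nil => simp
  | cons v t ih =>
    obtain ⟨i, j, -, rfl⟩ := hl v List.mem_cons_self
    simp [sum_add_distrib, sum_sub_distrib, ih fun w hw => hl w (List.mem_cons_of_mem _ hw)]

theorem stmt_8_general (n : ℕ) (γ : Fin n → ℤ)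
    (hsum : ∃ l : List (Fin n → ℤ), (∀ v ∈ l, IsRootA n v) ∧ γ = l.sum)
    (hnotroot : ¬ IsRootA n γ) (hne : γ ≠ 0) :
    ∃ g : Fin n → ℤ, (∀ i, g i = 1 ∨ g i = -1) ∧ 4 ≤ ∑ i, g i * γ i := by
  obtain ⟨l, hl, rfl⟩ := hsum
  have hzero := sum_list_sum_eq_zero_of_isRootA hl
  obtain ⟨g, hg, hgγ⟩ := exists_sign_forall_sum_mul_eq_sum_abs l.sum
  refine ⟨g, hg, ?_⟩
  have hpos0 : ∑ i, (l.sum i)⁺ ≠ 0 :=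
    fun h => hne (eq_zero_of_sum_eq_zero_of_sum_posPart_eq_zero hzero h)
  have hpos1 : ∑ i, (l.sum i)⁺ ≠ 1 :=
    fun h => hnotroot (isRootA_of_sum_eq_zero_of_sum_posPart_eq_one hzero h)
  have hnonneg : 0 ≤ ∑ i, (l.sum i)⁺ := sum_nonneg fun i _ => posPart_nonneg _
  rw [hgγ, sum_abs_eq_two_mul_sum_posPart hzero]
  omega

/-- If `γ` is a sum of roots of `Δ` and `γ ∉ Δ ∪ {0}`, then there is
`g : {ω₁,…,ωₙ} → {-1,1}` with `f_g(γ) ≥ 4`. -/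
theorem stmt_8 (n : ℕ) (hn : 3 ≤ n) (γ : Fin n → ℤ)
    (hsum : ∃ l : List (Fin n → ℤ), (∀ v ∈ l, IsRootA n v) ∧ γ = l.sum)
    (hnotroot : ¬ IsRootA n γ) (hne : γ ≠ 0) :
    ∃ g : Fin n → ℤ, (∀ i, g i = 1 ∨ g i = -1) ∧ 4 ≤ ∑ i, g i * γ i :=
  stmt_8_general n γ hsum hnotroot hne
end

section
/- Let A be an associative ring with A·A = A. Then there exists a universal annihilator extension ω : U → A: U is an associative ring with U·U = U, ω is a surjective ring homomorphism with ker ω ⊆ Ann(U), and for every annihilator extension ψ : A' → A there exists a ring homomorphism χ : U → A' with ψ ∘ χ = ω. -/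
/-!
Take `U = (A ⊗ A) / ⟨(ab) ⊗ c - a ⊗ (bc)⟩` with `ω (a ⊗ b) = a * b` and the product
`u * v = ω u ⊗ ω v`; it is associative precisely because of the relations divided out, and
`ω u = 0` forces `u * v = v * u = 0`. In an annihilator extension `ψ : A' → A` the product
`x * y` depends only on `ψ x` and `ψ y`, so `a ⊗ b ↦ x * y` for any lifts `x, y` of `a, b`
is a well-defined bilinear map; it kills the relations and descends to `χ : U → A'` over `A`.
-/

universe u

open TensorProduct

def ProductsSpan (R : Type*) [NonUnitalRing R] : Prop :=
  ∀ r : R, r ∈ AddSubgroup.closure {x : R | ∃ a b : R, x = a * b}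

section AnnihilatorExtension

variable {A A' : Type*} [NonUnitalRing A] [NonUnitalRing A'] (ψ : A' →ₙ+* A)

def KerAnnihilates : Prop := ∀ a : A', ψ a = 0 → ∀ b : A', a * b = 0 ∧ b * a = 0

lemma mul_eq_mul_of_map_eq_of_kerAnnihilates (hann : KerAnnihilates ψ) {x x' y y' : A'}
    (hx : ψ x = ψ x') (hy : ψ y = ψ y') : x * y = x' * y' := by
  have hx0 : (x - x') * y = 0 := (hann _ (by rw [map_sub, hx, sub_self]) y).1
  have hy0 : x' * (y - y') = 0 := (hann _ (by rw [map_sub, hy, sub_self]) x').2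
  rw [sub_mul, sub_eq_zero] at hx0
  rw [mul_sub, sub_eq_zero] at hy0
  rw [hx0, hy0]

variable {ψ} (hψ : Function.Surjective ψ)

noncomputable def liftedMul (a b : A) : A' :=
  Function.surjInv hψ a * Function.surjInv hψ b

lemma map_liftedMul (a b : A) : ψ (liftedMul hψ a b) = a * b := by
  rw [liftedMul, map_mul, Function.surjInv_eq hψ, Function.surjInv_eq hψ]

lemma liftedMul_eq (hann : KerAnnihilates ψ) {a b : A} {x y : A'} (hx : ψ x = a) (hy : ψ y = b) :
    liftedMul hψ a b = x * y :=
  mul_eq_mul_of_map_eq_of_kerAnnihilates ψ hann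
    ((Function.surjInv_eq hψ a).trans hx.symm) ((Function.surjInv_eq hψ b).trans hy.symm)

noncomputable def liftedMulₗ (hann : KerAnnihilates ψ) : A →ₗ[ℤ] A →ₗ[ℤ] A' :=
  let s := Function.surjInv hψ
  have hs : ∀ a, ψ (s a) = a := Function.surjInv_eq hψ
  LinearMap.mk₂ ℤ (liftedMul hψ)
    (fun a₁ a₂ b => by
      rw [liftedMul_eq hψ hann (x := s a₁ + s a₂) (by rw [map_add, hs, hs]) (hs b), add_mul]
      rfl)
    (fun n a b => by
      rw [liftedMul_eq hψ hann (x := n • s a) (by rw [map_zsmul, hs]) (hs b), smul_mul_assoc]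
      rfl)
    (fun a b₁ b₂ => by
      rw [liftedMul_eq hψ hann (y := s b₁ + s b₂) (hs a) (by rw [map_add, hs, hs]), mul_add]
      rfl)
    (fun n a b => by
      rw [liftedMul_eq hψ hann (y := n • s b) (hs a) (by rw [map_zsmul, hs]), mul_smul_comm]
      rfl)

@[simp] lemma liftedMulₗ_apply (hann : KerAnnihilates ψ) (a b : A) :
    liftedMulₗ hψ hann a b = liftedMul hψ a b := rfl

end AnnihilatorExtension

section UniversalAnnihilatorExtension

variable (A : Type*) [NonUnitalRing A]

noncomputable def mulMap : A ⊗[ℤ] A →ₗ[ℤ] A := TensorProduct.lift (LinearMap.mul ℤ A)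

@[simp] lemma mulMap_tmul (a b : A) : mulMap A (a ⊗ₜ b) = a * b := rfl

def assocRel : Submodule ℤ (A ⊗[ℤ] A) :=
  Submodule.span ℤ {t | ∃ a b c : A, t = (a * b) ⊗ₜ c - a ⊗ₜ (b * c)}

lemma assocRel_le_ker_mulMap : assocRel A ≤ LinearMap.ker (mulMap A) := by
  rw [assocRel, Submodule.span_le]
  rintro _ ⟨a, b, c, rfl⟩
  simp [mul_assoc]

abbrev UnivAnnExt : Type _ := (A ⊗[ℤ] A) ⧸ assocRel A

namespace UnivAnnExt

noncomputable def omega : UnivAnnExt A →ₗ[ℤ] A :=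
  (assocRel A).liftQ (mulMap A) (assocRel_le_ker_mulMap A)

@[simp] lemma omega_mk (t : A ⊗[ℤ] A) : omega A (Submodule.Quotient.mk t) = mulMap A t := rfl

noncomputable instance : Mul (UnivAnnExt A) :=
  ⟨fun u v => Submodule.Quotient.mk (omega A u ⊗ₜ omega A v)⟩

variable {A}

lemma mul_def (u v : UnivAnnExt A) :
    u * v = Submodule.Quotient.mk (omega A u ⊗ₜ omega A v) := rfl

lemma omega_mul (u v : UnivAnnExt A) : omega A (u * v) = omega A u * omega A v := rfl

noncomputable instance : NonUnitalRing (UnivAnnExt A) where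
  left_distrib u v w := by
    simp only [mul_def, map_add, tmul_add, Submodule.Quotient.mk_add]
  right_distrib u v w := by
    simp only [mul_def, map_add, add_tmul, Submodule.Quotient.mk_add]
  zero_mul u := by simp [mul_def]
  mul_zero u := by simp [mul_def]
  mul_assoc u v w := by
    simp only [mul_def, omega_mk, mulMap_tmul]
    rw [Submodule.Quotient.eq]
    exact Submodule.subset_span ⟨_, _, _, rfl⟩

variable (A) in
noncomputable def omegaHom : UnivAnnExt A →ₙ+* A :=
  { omega A with map_mul' := omega_mul, map_zero' := map_zero _ }

@[simp] lemma omegaHom_apply (u : UnivAnnExt A) : omegaHom A u = omega A u := rfl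

lemma omegaHom_surjective (hA : ProductsSpan A) :
    Function.Surjective (omegaHom A) := by
  have hle : AddSubgroup.closure {x : A | ∃ b c : A, x = b * c} ≤
      (LinearMap.range (omega A)).toAddSubgroup := by
    rw [AddSubgroup.closure_le]
    rintro _ ⟨b, c, rfl⟩
    exact ⟨Submodule.Quotient.mk (b ⊗ₜ c), rfl⟩
  exact fun a => hle (hA a)

lemma productsSpan (hω : Function.Surjective (omegaHom A)) : ProductsSpan (UnivAnnExt A) := by
  intro u
  obtain ⟨t, rfl⟩ := Submodule.Quotient.mk_surjective _ u
  induction t using TensorProduct.induction_on with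
  | zero => exact zero_mem _
  | tmul a b =>
    obtain ⟨x, rfl⟩ := hω a
    obtain ⟨y, rfl⟩ := hω b
    exact AddSubgroup.subset_closure ⟨x, y, rfl⟩
  | add t t' ht ht' => exact add_mem ht ht'

lemma kerAnnihilates_omegaHom : KerAnnihilates (omegaHom A) := by
  intro u hu v
  rw [omegaHom_apply] at hu
  simp [mul_def, hu]

section Lift

variable {A' : Type*} [NonUnitalRing A'] {ψ : A' →ₙ+* A} (hψ : Function.Surjective ψ)
  (hann : KerAnnihilates ψ)

lemma assocRel_le_ker_lift_liftedMulₗ :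
    assocRel A ≤ LinearMap.ker (TensorProduct.lift (liftedMulₗ hψ hann)) := by
  set s := Function.surjInv hψ
  have hs : ∀ a, ψ (s a) = a := Function.surjInv_eq hψ
  refine Submodule.span_le.mpr ?_
  rintro _ ⟨a, b, c, rfl⟩
  show TensorProduct.lift (liftedMulₗ hψ hann) (_ - _) = 0
  simp only [map_sub, TensorProduct.lift.tmul, liftedMulₗ_apply, sub_eq_zero]
  rw [liftedMul_eq hψ hann (x := s a * s b) (by rw [map_mul, hs, hs]) (hs c),
    liftedMul_eq hψ hann (y := s b * s c) (hs a) (by rw [map_mul, hs, hs]), mul_assoc]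

noncomputable def liftₗ : UnivAnnExt A →ₗ[ℤ] A' :=
  (assocRel A).liftQ (TensorProduct.lift (liftedMulₗ hψ hann))
    (assocRel_le_ker_lift_liftedMulₗ hψ hann)

lemma map_liftₗ (u : UnivAnnExt A) : ψ (liftₗ hψ hann u) = omega A u := by
  have h : ψ.toAddMonoidHom.toIntLinearMap ∘ₗ liftₗ hψ hann = omega A :=
    Submodule.linearMap_qext _ (TensorProduct.ext' fun a b => map_liftedMul hψ a b)
  exact LinearMap.congr_fun h u

noncomputable def lift : UnivAnnExt A →ₙ+* A' :=
  { liftₗ hψ hann with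
    map_mul' := fun u v =>
      liftedMul_eq hψ hann (map_liftₗ hψ hann u) (map_liftₗ hψ hann v)
    map_zero' := map_zero _ }

lemma map_lift (u : UnivAnnExt A) : ψ (lift hψ hann u) = omegaHom A u :=
  map_liftₗ hψ hann u

end Lift

end UnivAnnExt

end UniversalAnnihilatorExtension

/-- Existence of the universal annihilator extension of a ring `A` with `A·A = A`. -/
theorem stmt_11 (A : Type u) [NonUnitalRing A]
    (hA : ∀ a : A, a ∈ AddSubgroup.closure {x : A | ∃ b c : A, x = b * c}) :
    ∃ (U : Type u) (_ : NonUnitalRing U) (ω : U →ₙ+* A),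
      Function.Surjective ω ∧
      (∀ u : U, u ∈ AddSubgroup.closure {x : U | ∃ b c : U, x = b * c}) ∧
      (∀ u : U, ω u = 0 → ∀ v : U, u * v = 0 ∧ v * u = 0) ∧
      (∀ (A' : Type u) (_ : NonUnitalRing A') (ψ : A' →ₙ+* A),
        Function.Surjective ψ →
        (∀ a : A', a ∈ AddSubgroup.closure {x : A' | ∃ b c : A', x = b * c}) →
        (∀ a : A', ψ a = 0 → ∀ b : A', a * b = 0 ∧ b * a = 0) →
        ∃ χ : U →ₙ+* A', ∀ x : U, ψ (χ x) = ω x) := by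
  have hω := UnivAnnExt.omegaHom_surjective hA
  exact ⟨UnivAnnExt A, inferInstance, UnivAnnExt.omegaHom A, hω, UnivAnnExt.productsSpan hω,
    UnivAnnExt.kerAnnihilates_omegaHom,
    fun _ _ _ hψ _ hann => ⟨UnivAnnExt.lift hψ hann, UnivAnnExt.map_lift hψ hann⟩⟩
end

section
/- Let B be the unital F-algebra (char F ≠ 2) generated by elements e₁, e₂, … and z subject to eᵢeⱼ + eⱼeᵢ = 0, zeᵢ = eᵢz, z² = 0, and zeᵢeⱼe_k = 0 for all i,j,k. The linear map d : B → B defined on the basis {1; eᵢ₁⋯eᵢₖ (i₁<⋯<iₖ); z; zeᵢ; zeᵢeⱼ (i<j)} by d(eᵢ) = zeᵢ and d = 0 on all other basis elements is a Jordan derivation of B but not a derivation of B. -/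
/-!
Both sides of the Jordan identity are bilinear in `(a, b)`, so it suffices to check it on pairs
of monomials `e_{i₁}⋯e_{iₖ}` and `z e_{i₁}⋯e_{iₖ}`. By anticommutation every monomial is `0` or
`±` a sorted one, so `d` kills all monomials of length `≥ 2` and all `z`-monomials; since `z`
commutes with the `eᵢ`, `z² = 0` and `z` kills monomials of length `≥ 3`, every pair then gives
`0 = 0` except `(eᵢ, eⱼ)`, where both sides are multiples of `eᵢeⱼ + eⱼeᵢ = 0`.
A derivation would instead give `0 = d(e₀e₁) = 2 z e₀e₁`, a nonzero multiple of a basis vector.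
-/

open List

section Jordan

variable {R B : Type*} [CommRing R] [Ring B] [Algebra R B]

def JordanIdentity (d : B →ₗ[R] B) (a b : B) : Prop :=
  d (a * b + b * a) = d a * b + b * d a + a * d b + d b * a

theorem JordanIdentity.symm {d : B →ₗ[R] B} {a b : B} (h : JordanIdentity d a b) :
    JordanIdentity d b a := by
  unfold JordanIdentity at h ⊢
  rw [add_comm (b * a), h]
  abel

theorem jordanIdentity_one_left {d : B →ₗ[R] B} (hd1 : d 1 = 0) (b : B) :
    JordanIdentity d 1 b := by
  simp [JordanIdentity, hd1]

theorem jordanIdentity_of_span {d : B →ₗ[R] B} {s : Set B} (hs : Submodule.span R s = ⊤)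
    (h : ∀ a ∈ s, ∀ b ∈ s, JordanIdentity d a b) (a b : B) : JordanIdentity d a b := by
  let μ := LinearMap.mul R B
  have : (μ + μ.flip).compr₂ d = μ.comp d + μ.flip.comp d + μ.compl₂ d + μ.flip.compl₂ d :=
    LinearMap.ext_on hs fun a ha => LinearMap.ext_on hs fun b hb => h a ha b hb
  exact congr($this a b)

end Jordan

section Anticommuting

variable {B ι : Type*} [Ring B] {e : ι → B}

theorem exists_units_smul_prod_map_of_perm (he : ∀ i j, e i * e j + e j * e i = 0)
    {l l' : List ι} (h : l ~ l') : ∃ s : ℤˣ, (l.map e).prod = s • (l'.map e).prod := by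
  induction h with
  | nil => exact ⟨1, by simp⟩
  | cons i _ ih =>
    obtain ⟨s, hs⟩ := ih
    exact ⟨s, by simp only [map_cons, prod_cons, hs, Units.smul_def, mul_smul_comm]⟩
  | swap i j l =>
    refine ⟨-1, ?_⟩
    simp only [map_cons, prod_cons, ← mul_assoc, eq_neg_of_add_eq_zero_left (he j i)]
    simp
  | trans _ _ ih₁ ih₂ =>
    obtain ⟨s, hs⟩ := ih₁
    obtain ⟨t, ht⟩ := ih₂
    exact ⟨s * t, by rw [hs, ht, mul_smul]⟩

theorem prod_map_eq_zero_of_not_nodup (he : ∀ i j, e i * e j + e j * e i = 0)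
    (hsq : ∀ i, e i * e i = 0) {l : List ι} (hl : ¬ l.Nodup) : (l.map e).prod = 0 := by
  obtain ⟨i, hi⟩ : ∃ i, [i, i] <+ l := by simpa [nodup_iff_sublist] using hl
  obtain ⟨r, hr⟩ := hi.exists_perm_append
  obtain ⟨s, hs⟩ := exists_units_smul_prod_map_of_perm he hr
  simp [hs, ← mul_assoc, hsq]

theorem map_prod_map_eq_zero_of_isChain [LinearOrder ι] {M : Type*} [AddCommGroup M]
    (he : ∀ i j, e i * e j + e j * e i = 0) (hsq : ∀ i, e i * e i = 0) (f : B →+ M)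
    {p : ℕ → Prop} (hf : ∀ m : List ι, m.IsChain (· < ·) → p m.length → f (m.map e).prod = 0)
    (l : List ι) (hl : p l.length) : f (l.map e).prod = 0 := by
  by_cases hnd : l.Nodup
  · have hperm : l.insertionSort (· ≤ ·) ~ l := perm_insertionSort _ _
    have hsorted : (l.insertionSort (· ≤ ·)).IsChain (· < ·) :=
      isChain_iff_pairwise.mpr <| ((pairwise_insertionSort _ _).and (hperm.nodup_iff.mpr hnd)).imp
        fun h => lt_of_le_of_ne h.1 h.2
    obtain ⟨s, hs⟩ := exists_units_smul_prod_map_of_perm he hperm.symm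
    rw [hs, Units.smul_def, map_zsmul, hf _ hsorted (hperm.length_eq ▸ hl), smul_zero]
  · rw [prod_map_eq_zero_of_not_nodup he hsq hnd, map_zero]

end Anticommuting

section Monomials

variable {F B ι : Type*} [Field F] [Ring B] [Algebra F B] {e : ι → B} {z : B}
  {d : B →ₗ[F] B}

theorem eq_zero_of_add_self_eq_zero_of_two_ne_zero {M : Type*} [AddCommGroup M] [Module F M]
    (hF : (2 : F) ≠ 0) {x : M} (h : x + x = 0) : x = 0 := by
  rw [← two_smul F x] at h
  exact (smul_eq_zero.mp h).resolve_left hF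

theorem commute_prod_map (hz : ∀ i, Commute z (e i)) (l : List ι) : Commute z (l.map e).prod :=
  Commute.list_prod_right _ _ (by simp [hz])

theorem mul_mul_mul_eq_zero_of_commute_s12 {z x y : B} (hz : z * z = 0) (hx : Commute z x) :
    z * x * (z * y) = 0 := by
  rw [hx.eq, mul_assoc, ← mul_assoc z z, hz, zero_mul, mul_zero]

theorem z_mul_prod_map_eq_zero (hzeee : ∀ i j k, z * (e i * e j * e k) = 0) :
    ∀ l : List ι, 3 ≤ l.length → z * (l.map e).prod = 0
  | i :: j :: k :: r, _ => by
    simp only [map_cons, prod_cons, ← mul_assoc]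
    rw [mul_assoc z, mul_assoc z, hzeee, zero_mul]

theorem apply_z_mul_prod_map_eq_zero [LinearOrder ι] (he : ∀ i j, e i * e j + e j * e i = 0)
    (hsq : ∀ i, e i * e i = 0) (hz3 : ∀ l : List ι, 3 ≤ l.length → z * (l.map e).prod = 0)
    (hdz : d z = 0) (hdze : ∀ i, d (z * e i) = 0)
    (hdzee : ∀ i j, i < j → d (z * (e i * e j)) = 0) (l : List ι) :
    d (z * (l.map e).prod) = 0 := by
  match l with
  | [] => simpa using hdz
  | [i] => simpa using hdze i
  | [i, j] =>
    rcases lt_trichotomy i j with h | rfl | h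
    · simpa using hdzee i j h
    · simp [hsq]
    · simpa [eq_neg_of_add_eq_zero_left (he i j)] using hdzee j i h
  | l@(_ :: _ :: _ :: _) => rw [hz3 _ (by simp), map_zero]

theorem jordanIdentity_single_single (he : ∀ i j, e i * e j + e j * e i = 0)
    (hz : ∀ i, Commute z (e i)) (hde : ∀ i, d (e i) = z * e i) (i j : ι) :
    JordanIdentity d (e i) (e j) := by
  unfold JordanIdentity
  rw [he, map_zero, hde, hde, ← (hz j).left_comm, ← (hz i).left_comm]
  calc (0 : B) = z * (e i * e j + e j * e i) + z * (e i * e j + e j * e i) := by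
        rw [he, mul_zero, add_zero]
    _ = _ := by noncomm_ring

theorem jordanIdentity_single_prod_map (hz : ∀ i, Commute z (e i))
    (hz3 : ∀ l : List ι, 3 ≤ l.length → z * (l.map e).prod = 0) (hde : ∀ i, d (e i) = z * e i)
    (hd2 : ∀ l : List ι, 2 ≤ l.length → d (l.map e).prod = 0) (i : ι) {M : List ι}
    (hM : 2 ≤ M.length) : JordanIdentity d (e i) (M.map e).prod := by
  have hl : 3 ≤ (i :: M).length ∧ 3 ≤ (M ++ [i]).length := by simp; omega
  have hz₁ := hz3 _ hl.1
  have hz₂ := hz3 _ hl.2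
  have hd₁ := hd2 _ (by omega : 2 ≤ (i :: M).length)
  have hd₂ := hd2 _ (by omega : 2 ≤ (M ++ [i]).length)
  simp only [map_cons, map_nil, prod_cons, prod_nil, mul_one, map_append, prod_append]
    at hz₁ hz₂ hd₁ hd₂
  unfold JordanIdentity
  rw [map_add, hd₁, hd₂, hd2 M hM, hde, mul_assoc, ← (commute_prod_map hz M).left_comm, hz₁, hz₂]
  simp

theorem jordanIdentity_prod_map_of_two_le
    (hd2 : ∀ l : List ι, 2 ≤ l.length → d (l.map e).prod = 0) {L M : List ι}
    (hL : 2 ≤ L.length) (hM : 2 ≤ M.length) :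
    JordanIdentity d (L.map e).prod (M.map e).prod := by
  unfold JordanIdentity
  rw [← prod_append, ← map_append, ← prod_append, ← map_append, map_add,
    hd2 (L ++ M) (by simp; omega), hd2 (M ++ L) (by simp; omega), hd2 L hL, hd2 M hM]
  simp

theorem jordanIdentity_prod_map (he : ∀ i j, e i * e j + e j * e i = 0)
    (hz : ∀ i, Commute z (e i)) (hz3 : ∀ l : List ι, 3 ≤ l.length → z * (l.map e).prod = 0)
    (hd1 : d 1 = 0) (hde : ∀ i, d (e i) = z * e i)
    (hd2 : ∀ l : List ι, 2 ≤ l.length → d (l.map e).prod = 0) :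
    ∀ L M : List ι, JordanIdentity d (L.map e).prod (M.map e).prod
  | [], _ => by simpa using jordanIdentity_one_left hd1 _
  | _, [] => by simpa using (jordanIdentity_one_left hd1 _).symm
  | [i], [j] => by simpa using jordanIdentity_single_single he hz hde i j
  | [i], j :: k :: r => by
    simpa using jordanIdentity_single_prod_map hz hz3 hde hd2 i (M := j :: k :: r) (by simp)
  | i :: j :: r, [k] => by
    simpa using (jordanIdentity_single_prod_map hz hz3 hde hd2 k (M := i :: j :: r) (by simp)).symm
  | i :: j :: r, k :: l :: s => jordanIdentity_prod_map_of_two_le hd2 (by simp) (by simp)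

theorem jordanIdentity_prod_map_z_mul (hz : ∀ i, Commute z (e i)) (hzz : z * z = 0)
    (hd1 : d 1 = 0) (hde : ∀ i, d (e i) = z * e i)
    (hd2 : ∀ l : List ι, 2 ≤ l.length → d (l.map e).prod = 0)
    (hdz : ∀ l : List ι, d (z * (l.map e).prod) = 0) (L M : List ι) :
    JordanIdentity d (L.map e).prod (z * (M.map e).prod) := by
  have hda :
      d (L.map e).prod * (z * (M.map e).prod) + z * (M.map e).prod * d (L.map e).prod = 0 := by
    match L with
    | [] => simp [hd1]
    | [i] =>
      simp [hde, mul_mul_mul_eq_zero_of_commute_s12 hzz (hz i),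
        mul_mul_mul_eq_zero_of_commute_s12 hzz (commute_prod_map hz M)]
    | i :: j :: r => rw [hd2 (i :: j :: r) (by simp), zero_mul, mul_zero, add_zero]
  unfold JordanIdentity
  rw [← (commute_prod_map hz L).left_comm, mul_assoc, ← prod_append, ← map_append, ← prod_append,
    ← map_append, map_add, hdz, hdz, hdz, hda]
  simp

theorem jordanIdentity_z_mul_z_mul (hz : ∀ i, Commute z (e i)) (hzz : z * z = 0)
    (hdz : ∀ l : List ι, d (z * (l.map e).prod) = 0) (L M : List ι) :
    JordanIdentity d (z * (L.map e).prod) (z * (M.map e).prod) := by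
  unfold JordanIdentity
  rw [mul_mul_mul_eq_zero_of_commute_s12 hzz (commute_prod_map hz L),
    mul_mul_mul_eq_zero_of_commute_s12 hzz (commute_prod_map hz M), hdz, hdz]
  simp

end Monomials

/-- In the unital `F`-algebra (`char F ≠ 2`) with anticommuting generators `eᵢ` and a
central element `z` with `z² = 0`, `z·eᵢeⱼe_k = 0`, with the indicated basis, the
linear map `d` sending `eᵢ ↦ z·eᵢ` and all other basis elements to `0` is a Jordan
derivation but not a derivation. -/
theorem stmt_12 (F : Type*) [Field F] (hF : (2 : F) ≠ 0)
    (B : Type*) [Ring B] [Algebra F B]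
    (e : ℕ → B) (z : B)
    (rel1 : ∀ i j, e i * e j + e j * e i = 0)
    (rel2 : ∀ i, z * e i = e i * z)
    (rel3 : z ^ 2 = 0)
    (rel4 : ∀ i j k, z * (e i * e j * e k) = 0)
    -- the described family is a basis of `B`:
    (hindep : LinearIndependent F
      (Sum.elim
        (fun l : {l : List ℕ // l.Chain' (· < ·)} => ((l : List ℕ).map e).prod)
        (fun l : {l : List ℕ // l.Chain' (· < ·) ∧ l.length ≤ 2} =>
          z * ((l : List ℕ).map e).prod)))
    (hspan : Submodule.span F (Set.range
      (Sum.elim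
        (fun l : {l : List ℕ // l.Chain' (· < ·)} => ((l : List ℕ).map e).prod)
        (fun l : {l : List ℕ // l.Chain' (· < ·) ∧ l.length ≤ 2} =>
          z * ((l : List ℕ).map e).prod))) = ⊤)
    (d : B →ₗ[F] B)
    (hd1 : d 1 = 0) (hdz : d z = 0)
    (hde : ∀ i, d (e i) = z * e i)
    (hdprod : ∀ l : List ℕ, l.Chain' (· < ·) → 2 ≤ l.length → d (l.map e).prod = 0)
    (hdze : ∀ i, d (z * e i) = 0)
    (hdzee : ∀ i j, i < j → d (z * (e i * e j)) = 0) :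
    (∀ a b : B, d (a * b + b * a) = d a * b + b * d a + a * d b + d b * a) ∧
    ¬ (∀ a b : B, d (a * b) = d a * b + a * d b) := by
  have hsq : ∀ i, e i * e i = 0 := fun i => eq_zero_of_add_self_eq_zero_of_two_ne_zero hF (rel1 i i)
  have hz : ∀ i, Commute z (e i) := rel2
  have hzz : z * z = 0 := by rw [← sq, rel3]
  have hz3 := z_mul_prod_map_eq_zero rel4
  have hd2 : ∀ l : List ℕ, 2 ≤ l.length → d (l.map e).prod = 0 :=
    map_prod_map_eq_zero_of_isChain rel1 hsq d.toAddMonoidHom (p := (2 ≤ ·)) hdprod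
  have hdz' := apply_z_mul_prod_map_eq_zero rel1 hsq hz3 hdz hdze hdzee
  refine ⟨jordanIdentity_of_span hspan ?_, fun hder => ?_⟩
  · rintro _ ⟨L | L, rfl⟩ _ ⟨M | M, rfl⟩
    · exact jordanIdentity_prod_map rel1 hz hz3 hd1 hde hd2 L M
    · exact jordanIdentity_prod_map_z_mul hz hzz hd1 hde hd2 hdz' L M
    · exact (jordanIdentity_prod_map_z_mul hz hzz hd1 hde hd2 hdz' M L).symm
    · exact jordanIdentity_z_mul_z_mul hz hzz hdz' L M
  · have h := hder (e 0) (e 1)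
    have h01 : d (e 0 * e 1) = 0 := by simpa using hd2 [0, 1] le_rfl
    rw [h01, hde, hde, ← (hz 0).left_comm, mul_assoc] at h
    refine hindep.ne_zero (Sum.inr ⟨[0, 1], isChain_pair.mpr zero_lt_one, by simp⟩) ?_
    simpa using eq_zero_of_add_self_eq_zero_of_two_ne_zero hF h.symm
end

section
/- Let A be a unital associative ring with orthogonal full idempotents e₁, e₂, e₃ summing to 1, and suppose Ann(A) = 0. If x ∈ A satisfies x·c = 0 for every c ∈ [A,A], then x = 0. -/
/-!
For `i ≠ j` the Peirce component `eᵢ A eⱼ` consists of commutators, since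
`eᵢ a eⱼ = (eᵢ a) eⱼ - eⱼ (eᵢ a)`; hence `x` annihilates it. As `eⱼ` is full, every element of `A`
is a sum of terms `u eⱼ v`, and `eᵢ (u eⱼ v) eᵢ = (eᵢ u eⱼ) (v eᵢ)`, so `x` annihilates `eᵢ A eᵢ`,
in particular `eᵢ`. Summing over `i` gives `x = x · 1 = 0`.
-/

section

variable {A : Type*} [Ring A]

theorem mul_mul_mem_closure_commutators {e f : A} (hfe : f * e = 0) (a : A) :
    e * a * f ∈ AddSubgroup.closure {z : A | ∃ u v : A, z = u * v - v * u} :=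
  AddSubgroup.subset_closure ⟨e * a, f, by rw [← mul_assoc, hfe, zero_mul, sub_zero]⟩

theorem mul_mul_mul_eq_zero_of_closure_eq_top {x e f : A}
    (hf : AddSubgroup.closure {y : A | ∃ a b : A, y = a * f * b} = ⊤)
    (h : ∀ a, x * (e * a * f) = 0) (b g : A) : x * (e * b * g) = 0 := by
  let φ : A →+ A := (AddMonoidHom.mulLeft (x * e)).comp (AddMonoidHom.mulRight g)
  have hker : AddSubgroup.closure {y : A | ∃ a b : A, y = a * f * b} ≤ φ.ker := by
    rw [AddSubgroup.closure_le]
    rintro _ ⟨u, v, rfl⟩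
    change x * e * (u * f * v * g) = 0
    calc x * e * (u * f * v * g) = x * (e * u * f) * (v * g) := by noncomm_ring
      _ = 0 := by rw [h u, zero_mul]
  have hb : b ∈ φ.ker := hker (hf ▸ AddSubgroup.mem_top b)
  simpa only [φ, AddMonoidHom.mem_ker, AddMonoidHom.comp_apply, AddMonoidHom.coe_mulLeft,
    AddMonoidHom.coe_mulRight, mul_assoc] using hb

end

theorem stmt_16_general (A : Type*) [Ring A] (e : Fin 3 → A)
    (hidem : ∀ i, e i * e i = e i)
    (horth : ∀ i j, i ≠ j → e i * e j = 0)
    (hsum : ∑ i, e i = 1)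
    (hfull : ∀ i, AddSubgroup.closure {x : A | ∃ a b : A, x = a * e i * b} = ⊤)
    (x : A)
    (hx : ∀ c ∈ AddSubgroup.closure {z : A | ∃ u v : A, z = u * v - v * u}, x * c = 0) :
    x = 0 := by
  have hoff : ∀ i j, i ≠ j → ∀ a, x * (e i * a * e j) = 0 := fun i j hij a =>
    hx _ (mul_mul_mem_closure_commutators (horth j i hij.symm) a)
  have hdiag : ∀ i, x * e i = 0 := by
    intro i
    obtain ⟨j, hj⟩ := exists_ne i
    simpa only [mul_one, hidem] using
      mul_mul_mul_eq_zero_of_closure_eq_top (hfull j) (hoff i j hj.symm) 1 (e i)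
  calc x = x * ∑ i, e i := by rw [hsum, mul_one]
    _ = 0 := by simp only [Finset.mul_sum, hdiag, Finset.sum_const_zero]

/-- If `Ann(A) = 0` and `x·c = 0` for every `c ∈ [A,A]`, then `x = 0`. -/
theorem stmt_16 (A : Type*) [Ring A] (e : Fin 3 → A)
    (hidem : ∀ i, e i * e i = e i)
    (horth : ∀ i j, i ≠ j → e i * e j = 0)
    (hsum : ∑ i, e i = 1)
    (hfull : ∀ i, AddSubgroup.closure {x : A | ∃ a b : A, x = a * e i * b} = ⊤)
    (hann : ∀ a : A, (∀ b : A, a * b = 0 ∧ b * a = 0) → a = 0)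
    (x : A)
    (hx : ∀ c ∈ AddSubgroup.closure {z : A | ∃ u v : A, z = u * v - v * u}, x * c = 0) :
    x = 0 :=
  stmt_16_general A e hidem horth hsum hfull x hx
end
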